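/- arXiv:2301.11350 — 3 statements merged into one kernel-verified Lean document; each statement's English description precedes it below -/
import Mathlib

section
/- LMI implies dissipation inequality: let A ∈ ℝ^{n×n}, B ∈ ℝ^{n×m}, P ∈ ℝ^{n×n} symmetric positive definite, α, ε > 0, and suppose the block matrix W = [[PA + AᵀP + αP, PB], [BᵀP, −εI_m]] is negative semidefinite. Then for any differentiable trajectory χ : ℝ → ℝ^n satisfying χ'(t) = Aχ(t) + Bζ(t) with a disturbance ζ : ℝ → ℝ^m satisfying ‖ζ(t)‖² ≤ c for all t, the function V(t) = χ(t)ᵀPχ(t) satisfies V'(t) ≤ −αV(t) + εc. -/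
open Matrix

/-- LMI implies dissipation inequality: if the block matrix
`W = [[PA + AᵀP + αP, PB], [BᵀP, -εI]]` is negative semidefinite, with `P`
symmetric positive definite and `α, ε > 0`, then along any trajectory
`χ' = Aχ + Bζ` with `‖ζ(t)‖² ≤ c`, the Lyapunov function `V = χᵀPχ`
satisfies `V' ≤ -αV + εc`. -/
theorem lmi_dissipation {n m : ℕ}
    (A : Matrix (Fin n) (Fin n) ℝ) (B : Matrix (Fin n) (Fin m) ℝ)
    (P : Matrix (Fin n) (Fin n) ℝ) (hPsymm : P.IsSymm) (hP : P.PosDef)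
    (α ε : ℝ) (hα : 0 < α) (hε : 0 < ε)
    (hW : ∀ v : (Fin n ⊕ Fin m) → ℝ,
      v ⬝ᵥ (Matrix.fromBlocks (P * A + Aᵀ * P + α • P) (P * B)
        (Bᵀ * P) (-(ε • (1 : Matrix (Fin m) (Fin m) ℝ)))).mulVec v ≤ 0)
    (χ : ℝ → Fin n → ℝ) (ζ : ℝ → Fin m → ℝ) (c : ℝ)
    (hχ : ∀ t, HasDerivAt χ (A.mulVec (χ t) + B.mulVec (ζ t)) t)
    (hζ : ∀ t, ζ t ⬝ᵥ ζ t ≤ c) :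
    ∀ t, deriv (fun s => χ s ⬝ᵥ P.mulVec (χ s)) t
      ≤ -α * (χ t ⬝ᵥ P.mulVec (χ t)) + ε * c := by
  intro t
  set x := χ t with hx
  set z := ζ t with hz
  set d := A.mulVec x + B.mulVec z with hd
  have hcoord : ∀ i, HasDerivAt (fun s => χ s i) (d i) t := fun i =>
    (ContinuousLinearMap.proj (R := ℝ) (φ := fun _ : Fin n => ℝ) i).hasFDerivAt.comp_hasDerivAt
      t (hχ t)
  have hV : HasDerivAt (fun s => χ s ⬝ᵥ P.mulVec (χ s))
      (d ⬝ᵥ P.mulVec x + x ⬝ᵥ P.mulVec d) t := by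
    have h : HasDerivAt (fun s => ∑ j, χ s j * ∑ k, P j k * χ s k)
        (∑ j, (d j * ∑ k, P j k * x k + x j * ∑ k, P j k * d k)) t := by
      apply HasDerivAt.fun_sum
      intro j _
      exact (hcoord j).mul (HasDerivAt.fun_sum fun k _ => (hcoord k).const_mul (P j k))
    convert h using 1
    all_goals simp [dotProduct, Matrix.mulVec, Finset.sum_add_distrib]
  rw [hV.deriv]
  have tdot : ∀ {k l : ℕ} (u : Fin k → ℝ) (M : Matrix (Fin l) (Fin k) ℝ) (v : Fin l → ℝ),
      u ⬝ᵥ Mᵀ.mulVec v = M.mulVec u ⬝ᵥ v := by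
    intro k l u M v
    rw [Matrix.dotProduct_mulVec, Matrix.vecMul_transpose]
  have key := hW (Sum.elim x z)
  rw [Matrix.fromBlocks_mulVec, sumElim_dotProduct_sumElim] at key
  simp only [Matrix.add_mulVec, dotProduct_add, ← Matrix.mulVec_mulVec,
    Matrix.smul_mulVec, Matrix.one_mulVec, Matrix.neg_mulVec,
    dotProduct_smul, dotProduct_neg, smul_eq_mul, Sum.elim_comp_inl, Sum.elim_comp_inr] at key
  rw [tdot x A (P.mulVec x)] at key
  rw [tdot z B (P.mulVec x)] at key
  have hzc : ε * (z ⬝ᵥ z) ≤ ε * c := mul_le_mul_of_nonneg_left (hζ t) hε.le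
  have hdd : d ⬝ᵥ P.mulVec x + x ⬝ᵥ P.mulVec d
      = A.mulVec x ⬝ᵥ P.mulVec x + B.mulVec z ⬝ᵥ P.mulVec x
        + (x ⬝ᵥ P.mulVec (A.mulVec x) + x ⬝ᵥ P.mulVec (B.mulVec z)) := by
    rw [hd]
    simp [Matrix.mulVec_add, dotProduct_add, add_dotProduct]
  rw [hdd]
  linarith [key, hzc]
end

section
/- Combining the LMI dissipation inequality with the attractive ellipsoid lemma: under the hypotheses of the previous statement (W ≤ 0, ‖ζ(t)‖² ≤ c), every trajectory of χ' = Aχ + Bζ satisfies limsup_{t→∞} χ(t)ᵀPχ(t) ≤ εc/α; hence the ellipsoid {χ : χᵀPχ ≤ εc/α} is attractive and the system is practically stable. -/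
open Matrix Filter

/-- Combining the LMI dissipation inequality with the attractive ellipsoid
lemma: if `W = [[PA + AᵀP + αP, PB], [BᵀP, -εI]] ≤ 0` and `‖ζ(t)‖² ≤ c`, then
every trajectory of `χ' = Aχ + Bζ` satisfies
`limsup_{t→∞} χ(t)ᵀPχ(t) ≤ εc/α`, i.e. the ellipsoid `{χ : χᵀPχ ≤ εc/α}` is
attractive (practical stability). -/
theorem lmi_attractive_ellipsoid {n m : ℕ}
    (A : Matrix (Fin n) (Fin n) ℝ) (B : Matrix (Fin n) (Fin m) ℝ)
    (P : Matrix (Fin n) (Fin n) ℝ) (hPsymm : P.IsSymm) (hP : P.PosDef)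
    (α ε : ℝ) (hα : 0 < α) (hε : 0 < ε)
    (hW : ∀ v : (Fin n ⊕ Fin m) → ℝ,
      v ⬝ᵥ (Matrix.fromBlocks (P * A + Aᵀ * P + α • P) (P * B)
        (Bᵀ * P) (-(ε • (1 : Matrix (Fin m) (Fin m) ℝ)))).mulVec v ≤ 0)
    (χ : ℝ → Fin n → ℝ) (ζ : ℝ → Fin m → ℝ) (c : ℝ)
    (hχ : ∀ t, HasDerivAt χ (A.mulVec (χ t) + B.mulVec (ζ t)) t)
    (hζ : ∀ t, ζ t ⬝ᵥ ζ t ≤ c) :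
    limsup (fun t => χ t ⬝ᵥ P.mulVec (χ t)) atTop ≤ ε * c / α := by
  set V : ℝ → ℝ := fun t => χ t ⬝ᵥ P.mulVec (χ t) with hVdef
  set d : ℝ → Fin n → ℝ := fun t => A.mulVec (χ t) + B.mulVec (ζ t) with hddef
  set K : ℝ := ε * c / α with hKdef
  have hαK : α * K = ε * c := by
    rw [hKdef]; field_simp
  -- the quadratic-form inequality from the LMI
  have hquad : ∀ x : Fin n → ℝ, ∀ z : Fin m → ℝ,
      (A.mulVec x + B.mulVec z) ⬝ᵥ P.mulVec x + x ⬝ᵥ P.mulVec (A.mulVec x + B.mulVec z)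
        ≤ -α * (x ⬝ᵥ P.mulVec x) + ε * (z ⬝ᵥ z) := by
    intro x z
    have h := hW (Sum.elim x z)
    rw [fromBlocks_mulVec] at h
    simp only [Sum.elim_comp_inl, Sum.elim_comp_inr, sumElim_dotProduct_sumElim,
      dotProduct_add, add_mulVec, neg_mulVec, smul_mulVec, dotProduct_neg,
      dotProduct_smul, one_mulVec, ← mulVec_mulVec, smul_eq_mul] at h
    have h1 : x ⬝ᵥ Aᵀ.mulVec (P.mulVec x) = (A.mulVec x) ⬝ᵥ P.mulVec x := by
      rw [dotProduct_mulVec, vecMul_transpose]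
    have h2 : z ⬝ᵥ Bᵀ.mulVec (P.mulVec x) = (B.mulVec z) ⬝ᵥ P.mulVec x := by
      rw [dotProduct_mulVec, vecMul_transpose]
    rw [h1, h2] at h
    simp only [dotProduct_add, add_dotProduct, mulVec_add]
    linarith
  -- the derivative of the Lyapunov function
  have hV : ∀ t, HasDerivAt V (d t ⬝ᵥ P.mulVec (χ t) + χ t ⬝ᵥ P.mulVec (d t)) t := by
    intro t
    have hi : ∀ i, HasDerivAt (fun s => χ s i) (d t i) t := hasDerivAt_pi.1 (hχ t)
    have key : HasDerivAt (fun s => ∑ i, ∑ j, χ s i * (P i j * χ s j))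
        (∑ i, ∑ j, (d t i * (P i j * χ t j) + χ t i * (P i j * d t j))) t := by
      apply HasDerivAt.fun_sum; intro i _
      apply HasDerivAt.fun_sum; intro j _
      exact (hi i).mul ((hi j).const_mul (P i j))
    have e1 : (fun s => ∑ i, ∑ j, χ s i * (P i j * χ s j)) = V := by
      funext s
      simp [hVdef, dotProduct, mulVec, Finset.mul_sum]
    have e2 : (∑ i, ∑ j, (d t i * (P i j * χ t j) + χ t i * (P i j * d t j)))
        = d t ⬝ᵥ P.mulVec (χ t) + χ t ⬝ᵥ P.mulVec (d t) := by
      simp [dotProduct, mulVec, Finset.mul_sum, Finset.sum_add_distrib]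
    rw [← e1, ← e2]
    exact key
  -- the dissipation inequality for V
  have hVdiss : ∀ t, d t ⬝ᵥ P.mulVec (χ t) + χ t ⬝ᵥ P.mulVec (d t) ≤ -α * V t + α * K := by
    intro t
    rw [hαK]
    have := hquad (χ t) (ζ t)
    have hz := hζ t
    nlinarith [hε.le]
  -- the comparison function g
  set g : ℝ → ℝ := fun t => (V t - K) * Real.exp (α * t) with hgdef
  have hexp : ∀ t : ℝ, HasDerivAt (fun s => Real.exp (α * s)) (α * Real.exp (α * t)) t := by
    intro t
    have := (Real.hasDerivAt_exp (α * t)).comp t ((hasDerivAt_id t).const_mul α)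
    simpa [mul_comm, Function.comp_def] using this
  have hg : ∀ t, HasDerivAt g
      ((d t ⬝ᵥ P.mulVec (χ t) + χ t ⬝ᵥ P.mulVec (d t)) * Real.exp (α * t)
        + (V t - K) * (α * Real.exp (α * t))) t := by
    intro t
    exact ((hV t).sub_const K).mul (hexp t)
  have hganti : Antitone g := by
    apply antitone_of_deriv_nonpos
    · intro t
      exact ((hg t).differentiableAt : DifferentiableAt ℝ g t)
    · intro t
      rw [(hg t).deriv]
      have h1 := hVdiss t
      have h2 := (Real.exp_pos (α * t)).le
      nlinarith
  -- V t ≤ K + (V 0 - K) / exp (α t) for t ≥ 0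
  have hbound : ∀ t : ℝ, 0 ≤ t → V t ≤ K + (V 0 - K) / Real.exp (α * t) := by
    intro t ht
    have h := hganti ht
    have hg0 : g 0 = V 0 - K := by simp [hgdef]
    rw [hg0] at h
    have := (le_div_iff₀ (Real.exp_pos (α * t))).2 h
    linarith
  -- the bound tends to K
  have htend : Tendsto (fun t => K + (V 0 - K) / Real.exp (α * t)) atTop (nhds K) := by
    have h1 : Tendsto (fun t : ℝ => Real.exp (α * t)) atTop atTop :=
      Real.tendsto_exp_atTop.comp (tendsto_atTop_atTop_of_monotone
        (fun a b hab => by nlinarith) (fun b => ⟨b / α, by field_simp; exact le_rfl⟩))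
    have h2 : Tendsto (fun t : ℝ => (V 0 - K) / Real.exp (α * t)) atTop (nhds 0) :=
      Tendsto.div_atTop tendsto_const_nhds h1
    simpa using tendsto_const_nhds.add h2
  -- conclude
  have hVnonneg : ∀ t, 0 ≤ V t := by
    intro t
    simpa using hP.posSemidef.dotProduct_mulVec_nonneg (χ t)
  calc limsup V atTop
      ≤ limsup (fun t => K + (V 0 - K) / Real.exp (α * t)) atTop := by
        apply limsup_le_limsup
        · filter_upwards [eventually_ge_atTop (0 : ℝ)] with t ht
          exact hbound t ht
        · exact isCoboundedUnder_le_of_le atTop hVnonneg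
        · exact htend.isBoundedUnder_le
    _ = K := htend.limsup_eq
end

section
/- Recovery of thrust magnitude and direction: for any nonzero u ∈ ℝ³, writing f = ‖u‖ and û = u/‖u‖ (with û3 > −1), the extracted unit quaternion q̄ from û satisfies f·R(q̄)·e₃ = u. Thus the virtual control decomposition u = f_d R(q̄_d) e₃ is exact. -/
open Matrix

/-- The rotation matrix associated to a unit quaternion `(q0, q1, q2, q3)`. -/
def quatRotMat (q0 q1 q2 q3 : ℝ) : Matrix (Fin 3) (Fin 3) ℝ :=
  !![1 - 2*q2^2 - 2*q3^2, 2*q1*q2 - 2*q0*q3, 2*q1*q3 + 2*q0*q2;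
     2*q1*q2 + 2*q0*q3, 1 - 2*q1^2 - 2*q3^2, 2*q2*q3 - 2*q0*q1;
     2*q1*q3 - 2*q0*q2, 2*q2*q3 + 2*q0*q1, 1 - 2*q1^2 - 2*q2^2]

/-- Recovery of thrust magnitude and direction: for nonzero `u ∈ ℝ³`, writing
`f = ‖u‖` and `û = u/‖u‖` (with `û3 > -1`), the extracted unit quaternion `q̄`
from `û` satisfies `f·R(q̄)·e₃ = u`; the decomposition `u = f_d R(q̄_d) e₃` is
exact. -/
theorem thrust_decomposition_exact (u1 u2 u3 : ℝ)
    (hu : ¬(u1 = 0 ∧ u2 = 0 ∧ u3 = 0))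
    (f : ℝ) (hf : f = Real.sqrt (u1 ^ 2 + u2 ^ 2 + u3 ^ 2))
    (hu3 : -1 < u3 / f) :
    f • (quatRotMat ((1 / 2) * Real.sqrt (2 * (u3 / f) + 2))
      (-(u2 / f) / Real.sqrt (2 * (u3 / f) + 2))
      ((u1 / f) / Real.sqrt (2 * (u3 / f) + 2)) 0).mulVec ![0, 0, 1]
      = ![u1, u2, u3] := by
  have hne : u1 ^ 2 + u2 ^ 2 + u3 ^ 2 ≠ 0 := by
    intro h
    exact hu ⟨by nlinarith [sq_nonneg u1, sq_nonneg u2, sq_nonneg u3],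
      by nlinarith [sq_nonneg u1, sq_nonneg u2, sq_nonneg u3],
      by nlinarith [sq_nonneg u1, sq_nonneg u2, sq_nonneg u3]⟩
  have hpos : 0 < u1 ^ 2 + u2 ^ 2 + u3 ^ 2 :=
    lt_of_le_of_ne (by positivity) (Ne.symm hne)
  have hfpos : 0 < f := hf ▸ Real.sqrt_pos.mpr hpos
  have hfsq : f ^ 2 = u1 ^ 2 + u2 ^ 2 + u3 ^ 2 := by
    rw [hf, Real.sq_sqrt hpos.le]
  have hspos : 0 < 2 * (u3 / f) + 2 := by linarith
  set s := Real.sqrt (2 * (u3 / f) + 2) with hs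
  have hsp : 0 < s := Real.sqrt_pos.mpr hspos
  have hssq : s ^ 2 = 2 * (u3 / f) + 2 := Real.sq_sqrt hspos.le
  have hkey : f ^ 2 * s ^ 2 = 2 * u3 * f + 2 * f ^ 2 := by
    rw [hssq]; field_simp
  funext i
  fin_cases i <;>
    simp [quatRotMat, mulVec, dotProduct, Fin.sum_univ_three] <;>
    field_simp
  · have h2 : f * s ^ 2 = 2 * u3 + 2 * f :=
      mul_left_cancel₀ hfpos.ne' (by linear_combination hkey)
    linear_combination (f - u3) * h2 + 2 * hfsq
end
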